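/- Let R be a Noetherian graded ring with graded maximal ideal m, and let X be a graded R-module which is R_+-torsion. If (0 :_X R_+) = Hom_R(R/R_+, X) is finitely generated and m-torsion, then (0 :_X R_+) is Artinian, and consequently X is Artinian if X is also m_0-torsion. -/

import Mathlib

open CategoryTheory CategoryTheory.Limits Opposite

/-- `ℕ` acts on `ℤ`-degrees by addition (used to grade modules over `ℕ`-graded rings). -/
instance : VAdd ℕ ℤ := ⟨fun n z => (n : ℤ) + z⟩

noncomputable section

/-- The directed system `M ⧸ a^t • M`, `t : ℕ`. -/
def genLCModDiagram {R : Type} [CommRing R] (a : Ideal R) (M : Type) [AddCommGroup M]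
    [Module R M] : ℕᵒᵖ ⥤ ModuleCat R where
  obj t := ModuleCat.of R (M ⧸ (a ^ (unop t) • ⊤ : Submodule R M))
  map {t t'} w := ModuleCat.ofHom (Submodule.mapQ (a ^ (unop t) • ⊤) (a ^ (unop t') • ⊤) LinearMap.id
    (Submodule.smul_mono (Ideal.pow_le_pow_right w.unop.down.down) le_rfl))
  map_id t := by
    apply ModuleCat.hom_ext
    simp only [ModuleCat.hom_ofHom, ModuleCat.hom_id]
    exact Submodule.mapQ_id _
  map_comp {t t' t''} f g := by
    apply ModuleCat.hom_ext
    simp only [ModuleCat.hom_comp, ModuleCat.hom_ofHom]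
    rw [← Submodule.mapQ_comp]
    rfl

/-- Generalized local cohomology `H^i_a(M, -)`, the direct limit of `Ext^i(M/a^t M, -)`. -/
def genLocalCohomology {R : Type} [CommRing R] (a : Ideal R) (M : Type) [AddCommGroup M]
    [Module R M] (i : ℕ) : ModuleCat R ⥤ ModuleCat R :=
  colimit ((genLCModDiagram a M).op ⋙ Ext R (ModuleCat R) i)

/-- `H^i_a(M,N)` as an object of `ModuleCat R`. -/
abbrev GLC {R : Type} [CommRing R] (a : Ideal R) (M : Type) [AddCommGroup M] [Module R M]
    (i : ℕ) (N : Type) [AddCommGroup N] [Module R N] : ModuleCat R :=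
  (genLocalCohomology a M i).obj (ModuleCat.of R N)

/-- The `a`-torsion functor `Γ_a` : the submodule of elements killed by some power of `a`. -/
def torsionGamma {R : Type} [CommRing R] (a : Ideal R) (X : Type) [AddCommGroup X]
    [Module R X] : Submodule R X :=
  ⨆ n : ℕ, Submodule.torsionBySet R X ((a ^ n : Ideal R) : Set R)

/-- `M` has projective dimension at most `n`: all `Ext^i(M, -)` for `i > n` vanish. -/
def HasProjDimLE {R : Type} [CommRing R] (M : Type) [AddCommGroup M] [Module R M]
    (n : ℕ) : Prop :=
  ∀ i : ℕ, n < i → ∀ N : ModuleCat R,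
    Subsingleton (((Ext R (ModuleCat R) i).obj (op (ModuleCat.of R M))).obj N)

/-- The irrelevant ideal `R_+` of an `ℕ`-graded ring. -/
def irrIdeal {R : Type} [CommRing R] (𝒜 : ℕ → AddSubgroup R) [GradedRing 𝒜] : Ideal R :=
  (HomogeneousIdeal.irrelevant 𝒜).toIdeal

/-- The ideal `m₀R` of `R` generated by the maximal ideal of the base ring `R₀ = 𝒜 0`. -/
def mzR {R : Type} [CommRing R] (𝒜 : ℕ → AddSubgroup R) [GradedRing 𝒜]
    [IsLocalRing (𝒜 0)] : Ideal R :=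
  Ideal.span (Subtype.val '' ((IsLocalRing.maximalIdeal (𝒜 0) : Ideal (𝒜 0)) : Set (𝒜 0)))

/-!
The ideal `m = m₀R + R₊` is maximal: it is the preimage of the maximal ideal of `R₀` under the
projection `R → R₀`. A finitely generated module whose elements are killed by powers of `m` is
killed by a single power `m^k`, so it is a finitely generated module over the Artinian ring
`R ⧸ m^k`, hence Artinian. This gives the first claim. For the second, `X` is then `m`-torsion and
`(0 :_X m) ⊆ (0 :_X R₊)` is Artinian, so Melkersson's lemma applies.

Melkersson's lemma reduces, by induction on the number of generators, to a principal ideal `(x)`.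
There a descending chain `V_j` is pinned down by the layers `x^k (V_j ∩ (0 :_M x^(k+1)))`, which
live in the Artinian module `(0 :_M x)` and hence stabilise jointly in `j` and `k`, together
with the chain `V_j ∩ (0 :_M x^k)` in the Artinian module `(0 :_M x^k)`.
-/

open Submodule
open scoped Pointwise

section ArtinianChains

variable {R M : Type*} [CommRing R] [AddCommGroup M] [Module R M]

theorem antitone_chain_condition_of_le {K : Submodule R M} [IsArtinian R K]
    {f : ℕ → Submodule R M} (hf : Antitone f) (hK : ∀ n, f n ≤ K) :
    ∃ n, ∀ m, n ≤ m → f n = f m := by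
  have : WellFoundedLT (Set.Iic K) := K.mapIic.symm.strictMono.wellFoundedLT
  obtain ⟨n, hn⟩ := WellFoundedLT.antitone_chain_condition
    (f := fun n => (⟨f n, hK n⟩ : Set.Iic K)) fun _ _ h => hf h
  exact ⟨n, fun m hm => congrArg Subtype.val (hn m hm)⟩

theorem isArtinian_torsionBy_pow (x : R) [IsArtinian R (torsionBy R M x)] :
    ∀ k : ℕ, IsArtinian R (torsionBy R M (x ^ k))
  | 0 => by rw [pow_zero, torsionBy_one]; infer_instance
  | k + 1 => by
    have := isArtinian_torsionBy_pow x k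
    refine isArtinian_of_range_eq_ker
      (inclusion (torsionBy_le_torsionBy_of_dvd _ _ (pow_dvd_pow x k.le_succ)))
      ((x ^ k • LinearMap.id).restrict (q := torsionBy R M x) fun m hm => ?_) ?_
    · rw [mem_torsionBy_iff, LinearMap.smul_apply, LinearMap.id_apply, smul_smul, ← pow_succ']
      exact hm
    · ext m
      simp [Subtype.ext_iff]

end ArtinianChains

section Melkersson

variable {R M : Type*} [CommRing R] [AddCommGroup M] [Module R M] (x : R)

def socleLayer (k : ℕ) (V : Submodule R M) : Submodule R M :=
  x ^ k • (V ⊓ torsionBy R M (x ^ (k + 1)))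

variable {x}

theorem mem_socleLayer {k : ℕ} {V : Submodule R M} {m : M} :
    m ∈ socleLayer x k V ↔ ∃ v ∈ V, x ^ (k + 1) • v = 0 ∧ x ^ k • v = m := by
  simp [socleLayer, mem_smul_pointwise_iff_exists, and_assoc]

variable (x)

theorem socleLayer_le_torsionBy (k : ℕ) (V : Submodule R M) :
    socleLayer x k V ≤ torsionBy R M x := by
  intro m hm
  obtain ⟨v, -, hv, rfl⟩ := mem_socleLayer.1 hm
  rwa [mem_torsionBy_iff, smul_smul, ← pow_succ']

theorem socleLayer_mono (k : ℕ) : Monotone (socleLayer (M := M) x k) :=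
  fun _ _ h => smul_mono_right _ (inf_le_inf_right _ h)

theorem socleLayer_antitone (V : Submodule R M) : Antitone (socleLayer x · V) := by
  refine antitone_nat_of_succ_le fun k m hm => ?_
  obtain ⟨v, hv, hv1, rfl⟩ := mem_socleLayer.1 hm
  exact mem_socleLayer.2
    ⟨x • v, V.smul_mem x hv, by rwa [smul_smul, ← pow_succ], by rw [smul_smul, ← pow_succ]⟩

theorem inf_torsionBy_pow_succ_eq {k : ℕ} {V W : Submodule R M} (hVW : V ≤ W)
    (h : V ⊓ torsionBy R M (x ^ k) = W ⊓ torsionBy R M (x ^ k))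
    (hl : socleLayer x k W ≤ socleLayer x k V) :
    V ⊓ torsionBy R M (x ^ (k + 1)) = W ⊓ torsionBy R M (x ^ (k + 1)) := by
  refine le_antisymm (inf_le_inf_right _ hVW) fun w ⟨hw, hwk⟩ => ⟨?_, hwk⟩
  obtain ⟨v, hv, -, hvw⟩ := mem_socleLayer.1 (hl (mem_socleLayer.2 ⟨w, hw, hwk, rfl⟩))
  have hwv : w - v ∈ W ⊓ torsionBy R M (x ^ k) :=
    ⟨W.sub_mem hw (hVW hv), (mem_torsionBy_iff _ _).2 (by rw [smul_sub, hvw, sub_self])⟩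
  rw [← h] at hwv
  simpa using V.add_mem hwv.1 hv

theorem eq_of_socleLayer_le (htor : ∀ m : M, ∃ k, x ^ k • m = 0) {n : ℕ} {V W : Submodule R M}
    (hVW : V ≤ W) (h : V ⊓ torsionBy R M (x ^ n) = W ⊓ torsionBy R M (x ^ n))
    (hl : ∀ k, n ≤ k → socleLayer x k W ≤ socleLayer x k V) : V = W := by
  have hinf : ∀ d, V ⊓ torsionBy R M (x ^ (n + d)) = W ⊓ torsionBy R M (x ^ (n + d)) := by
    intro d
    induction d with
    | zero => exact h
    | succ d ih => exact inf_torsionBy_pow_succ_eq x hVW ih (hl _ (Nat.le_add_right n d))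
  refine le_antisymm hVW fun w hw => ?_
  obtain ⟨d, hd⟩ := htor w
  have hwd : w ∈ torsionBy R M (x ^ (n + d)) :=
    torsionBy_le_torsionBy_of_dvd _ _ (pow_dvd_pow x (Nat.le_add_left d n)) hd
  have hwVW : w ∈ W ⊓ torsionBy R M (x ^ (n + d)) := ⟨hw, hwd⟩
  exact (hinf d ▸ hwVW).1

theorem isArtinian_of_isArtinian_torsionBy (htor : ∀ m : M, ∃ k, x ^ k • m = 0)
    [IsArtinian R (torsionBy R M x)] : IsArtinian R M := by
  rw [← monotone_stabilizes_iff_artinian]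
  intro V
  have hV : Antitone fun j => OrderDual.ofDual (V j) := fun i j h => V.monotone h
  have hsoc : ∀ i j, i ≤ j → socleLayer x j (V j) ≤ socleLayer x i (V i) := fun i j h =>
    (socleLayer_antitone x _ h).trans (socleLayer_mono x i (hV h))
  obtain ⟨j₀, hj₀⟩ := antitone_chain_condition_of_le (K := torsionBy R M x)
    (f := fun j => socleLayer x j (V j)) hsoc fun j => socleLayer_le_torsionBy x j _
  have := isArtinian_torsionBy_pow (M := M) x j₀
  obtain ⟨j₁, hj₁⟩ := antitone_chain_condition_of_le (K := torsionBy R M (x ^ j₀))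
    (f := fun j => OrderDual.ofDual (V j) ⊓ torsionBy R M (x ^ j₀))
    (fun i j h => inf_le_inf_right _ (hV h)) fun j => inf_le_right
  refine ⟨max j₀ j₁, fun j hj =>
    (eq_of_socleLayer_le x htor (n := j₀) (hV hj) ?_ fun k hk => ?_).symm⟩
  · rw [← hj₁ j (le_of_max_le_right hj), ← hj₁ _ (le_max_right _ _)]
  · calc socleLayer x k (V (max j₀ j₁))
        ≤ socleLayer x j₀ (V j₀) :=
          (socleLayer_antitone x _ hk).trans (socleLayer_mono x _ (hV (le_max_left _ _)))
      _ = socleLayer x (max k j) (V (max k j)) := hj₀ _ (le_max_of_le_left hk)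
      _ ≤ socleLayer x k (V j) :=
          (socleLayer_antitone x _ (le_max_left _ _)).trans
            (socleLayer_mono x _ (hV (le_max_right _ _)))

end Melkersson

section MelkerssonFG

variable {R M : Type*} [CommRing R] [AddCommGroup M] [Module R M]

theorem isArtinian_of_isArtinian_torsionBySet_finset (s : Finset R)
    (htor : ∀ m : M, ∃ k, ∀ r ∈ Ideal.span (s : Set R) ^ k, r • m = 0)
    [IsArtinian R (torsionBySet R M s)] : IsArtinian R M := by
  classical
  induction s using Finset.induction_on generalizing M with
  | empty =>
    have htop : torsionBySet R M (∅ : Finset R) = ⊤ := eq_top_iff.2 fun m _ =>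
      (mem_torsionBySet_iff _ _).2 fun ⟨_, h⟩ => (Finset.notMem_empty _ h).elim
    have : IsArtinian R (⊤ : Submodule R M) := htop ▸ ‹_›
    exact isArtinian_of_linearEquiv topEquiv
  | insert x s _ ih =>
    have hspan : Ideal.span (s : Set R) ≤ Ideal.span (insert x s : Finset R) :=
      Ideal.span_mono (by simp)
    have hx : ∀ m : M, ∃ k, x ^ k • m = 0 := fun m =>
      (htor m).imp fun k hk => hk _ (Ideal.pow_mem_pow (Ideal.subset_span (by simp)) k)
    set Y := torsionBy R M x
    have : IsArtinian R (torsionBySet R Y s) := by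
      let ι : torsionBySet R Y s →ₗ[R] torsionBySet R M (insert x s : Finset R) :=
        (Y.subtype ∘ₗ (torsionBySet R Y s).subtype).codRestrict _ fun z => by
          rw [Finset.coe_insert, mem_torsionBySet_iff]
          rintro ⟨a, rfl | ha⟩
          · exact (z : Y).2
          · exact congrArg Subtype.val ((mem_torsionBySet_iff _ _).1 z.2 ⟨a, ha⟩)
      exact isArtinian_of_injective ι fun z z' h =>
        Subtype.ext (Subtype.ext (congrArg (fun w : torsionBySet R M _ => (w : M)) h))
    have : IsArtinian R Y := ih fun y => (htor y).imp fun k hk r hr =>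
      Subtype.ext (hk r (Ideal.pow_right_mono hspan k hr))
    exact isArtinian_of_isArtinian_torsionBy x hx

theorem isArtinian_of_isArtinian_torsionBySet {a : Ideal R} (ha : a.FG)
    (htor : ∀ m : M, ∃ k, ∀ r ∈ a ^ k, r • m = 0)
    [IsArtinian R (torsionBySet R M a)] : IsArtinian R M := by
  obtain ⟨s, rfl⟩ := ha
  rw [← torsionBySet_eq_torsionBySet_span] at *
  exact isArtinian_of_isArtinian_torsionBySet_finset s htor

end MelkerssonFG

section FiniteLength

variable {R M : Type*} [CommRing R] [AddCommGroup M] [Module R M]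

theorem exists_pow_sup_smul_eq_zero {a b : Ideal R} {m : M}
    (ha : ∃ k, ∀ r ∈ a ^ k, r • m = 0) (hb : ∃ k, ∀ r ∈ b ^ k, r • m = 0) :
    ∃ k, ∀ r ∈ (a ⊔ b) ^ k, r • m = 0 := by
  obtain ⟨k, hk⟩ := ha
  obtain ⟨l, hl⟩ := hb
  refine ⟨k + l, fun r hr => ?_⟩
  obtain ⟨s, hs, t, ht, rfl⟩ := mem_sup.1 (Ideal.sup_pow_add_le_pow_sup_pow hr)
  rw [add_smul, hk s hs, hl t ht, add_zero]

theorem exists_pow_le_annihilator [Module.Finite R M] {a : Ideal R}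
    (htor : ∀ m : M, ∃ k, ∀ r ∈ a ^ k, r • m = 0) : ∃ k, a ^ k ≤ Module.annihilator R M := by
  classical
  obtain ⟨s, hs⟩ := Module.Finite.fg_top (R := R) (M := M)
  choose k hk using htor
  refine ⟨s.sup k, fun r hr => ?_⟩
  rw [← annihilator_top, ← hs, mem_annihilator_span]
  exact fun m => hk m r (Ideal.pow_le_pow_right (Finset.le_sup m.2) hr)

theorem isArtinianRing_quotient_pow [IsNoetherianRing R] (p : Ideal R) [p.IsMaximal] (k : ℕ) :
    IsArtinianRing (R ⧸ p ^ k) := by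
  have : Ring.KrullDimLE 0 (R ⧸ p ^ k) :=
    Ideal.krullDimLE_zero_quotient_iff_forall_minimalPrimes_isMaximal.2 fun q hq => by
      have hq' := hq.1.1
      rwa [← ‹p.IsMaximal›.eq_of_le hq'.ne_top (hq'.le_of_pow_le hq.1.2)]
  exact IsNoetherianRing.isArtinianRing_of_krullDimLE_zero

theorem isArtinian_of_pow_le_annihilator [IsNoetherianRing R] [Module.Finite R M]
    {p : Ideal R} [p.IsMaximal] {k : ℕ} (h : p ^ k ≤ Module.annihilator R M) :
    IsArtinian R M := by
  have hM : Module.IsTorsionBySet R M (p ^ k : Ideal R) :=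
    (Module.isTorsionBySet_iff_subset_annihilator R M).2 h
  let := hM.module
  have := hM.isScalarTower (S := R)
  have := isArtinianRing_quotient_pow p k
  have := Module.Finite.of_restrictScalars_finite R (R ⧸ p ^ k) M
  exact isArtinian_of_surjective_algebraMap (R := R ⧸ p ^ k) Ideal.Quotient.mk_surjective

end FiniteLength

section Graded

variable {R : Type} [CommRing R] (𝒜 : ℕ → AddSubgroup R) [GradedRing 𝒜] [IsLocalRing (𝒜 0)]

theorem mzR_sup_irrIdeal_eq_comap :
    mzR 𝒜 ⊔ irrIdeal 𝒜 =
      (IsLocalRing.maximalIdeal (𝒜 0)).comap (GradedRing.projZeroRingHom' 𝒜) := by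
  refine le_antisymm (sup_le ?_ fun r hr => ?_) fun r hr => ?_
  · rw [mzR, Ideal.span_le]
    rintro _ ⟨v, hv, rfl⟩
    simpa using hv
  · have : GradedRing.projZeroRingHom' 𝒜 r = 0 := Subtype.ext hr
    simp [this]
  · have hdecomp :
        r = (r - GradedRing.projZeroRingHom' 𝒜 r) + GradedRing.projZeroRingHom' 𝒜 r := by
      ring
    rw [hdecomp]
    refine add_mem (mem_sup_right ?_) (mem_sup_left (Ideal.subset_span ⟨_, hr, rfl⟩))
    show GradedRing.projZeroRingHom 𝒜 _ = 0
    simp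

theorem isMaximal_mzR_sup_irrIdeal : (mzR 𝒜 ⊔ irrIdeal 𝒜).IsMaximal := by
  rw [mzR_sup_irrIdeal_eq_comap]
  exact Ideal.comap_isMaximal_of_surjective _ (GradedRing.projZeroRingHom'_surjective 𝒜)

end Graded

theorem stmt15_general {R : Type} [CommRing R] [IsNoetherianRing R]
    (𝒜 : ℕ → AddSubgroup R) [GradedRing 𝒜] [IsLocalRing (𝒜 0)]
    (X : Type) [AddCommGroup X] [Module R X]
    (hXtor : ∀ x : X, ∃ k : ℕ, ∀ r ∈ (irrIdeal 𝒜) ^ k, r • x = 0)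
    (hfg : Module.Finite R (Submodule.torsionBySet R X ((irrIdeal 𝒜 : Ideal R) : Set R)))
    (hmtor : ∀ y : Submodule.torsionBySet R X ((irrIdeal 𝒜 : Ideal R) : Set R),
      ∃ k : ℕ, ∀ r ∈ (mzR 𝒜 ⊔ irrIdeal 𝒜) ^ k, r • y = 0) :
    IsArtinian R (Submodule.torsionBySet R X ((irrIdeal 𝒜 : Ideal R) : Set R)) ∧
      ((∀ x : X, ∃ k : ℕ, ∀ r ∈ (mzR 𝒜) ^ k, r • x = 0) → IsArtinian R X) := by
  have := isMaximal_mzR_sup_irrIdeal 𝒜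
  obtain ⟨k, hk⟩ := exists_pow_le_annihilator hmtor
  have hsoc := isArtinian_of_pow_le_annihilator hk
  refine ⟨hsoc, fun hm0 => ?_⟩
  have hle : torsionBySet R X (mzR 𝒜 ⊔ irrIdeal 𝒜 : Ideal R) ≤ torsionBySet R X (irrIdeal 𝒜) :=
    torsionBySet_le_torsionBySet_of_subset (SetLike.coe_subset_coe.2 le_sup_right)
  have : IsArtinian R (torsionBySet R X (mzR 𝒜 ⊔ irrIdeal 𝒜 : Ideal R)) :=
    isArtinian_of_injective (inclusion hle) (inclusion_injective hle)
  exact isArtinian_of_isArtinian_torsionBySet (IsNoetherian.noetherian _)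
    fun x => exists_pow_sup_smul_eq_zero (hm0 x) (hXtor x)

/-- If a graded module `X` is `R_+`-torsion and `(0 :_X R_+)` is finitely generated and
`m`-torsion, then `(0 :_X R_+)` is Artinian; consequently `X` is Artinian if `X` is
moreover `m₀`-torsion. -/
theorem stmt15 {R : Type} [CommRing R] [IsNoetherianRing R]
    (𝒜 : ℕ → AddSubgroup R) [GradedRing 𝒜] [IsLocalRing (𝒜 0)]
    (hhom : Subring.closure ((𝒜 0 : Set R) ∪ (𝒜 1 : Set R)) = ⊤)
    (X : Type) [AddCommGroup X] [Module R X]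
    (𝒳 : ℤ → AddSubgroup X) [SetLike.GradedSMul 𝒜 𝒳] [DirectSum.Decomposition 𝒳]
    (hXtor : ∀ x : X, ∃ k : ℕ, ∀ r ∈ (irrIdeal 𝒜) ^ k, r • x = 0)
    (hfg : Module.Finite R (Submodule.torsionBySet R X ((irrIdeal 𝒜 : Ideal R) : Set R)))
    (hmtor : ∀ y : Submodule.torsionBySet R X ((irrIdeal 𝒜 : Ideal R) : Set R),
      ∃ k : ℕ, ∀ r ∈ (mzR 𝒜 ⊔ irrIdeal 𝒜) ^ k, r • y = 0) :
    IsArtinian R (Submodule.torsionBySet R X ((irrIdeal 𝒜 : Ideal R) : Set R)) ∧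
      ((∀ x : X, ∃ k : ℕ, ∀ r ∈ (mzR 𝒜) ^ k, r • x = 0) → IsArtinian R X) :=
  stmt15_general 𝒜 X hXtor hfg hmtor
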